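/- Let k be a field of characteristic ≠ 2 with u(k) < ∞, and let i, j ≥ 1 be any positive integers. Then max{1, m(k) + 2j − 1 − i} ≤ m_{i,j}(k) ≤ max{1, u(k) + 2j − 1 − i}. Moreover, if either u(k) + 2j − 1 − i ≤ 1 or m(k) = u(k), then both inequalities are equalities. -/

import Mathlib

/-!  Diagonal quadratic forms over a field of characteristic ≠ 2.
In characteristic ≠ 2 every regular quadratic form is isometric to a diagonal form
`⟨d 1, …, d n⟩`, so we model (regular) quadratic forms by their diagonal
coefficient functions. -/

/-- The diagonal quadratic form `⟨d i⟩_{i : ι}` over `k`. -/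
noncomputable def diagQF (k : Type) [Field k] {ι : Type} [Fintype ι] (d : ι → k) :
    QuadraticForm k (ι → k) :=
  QuadraticMap.weightedSumSquares k d

/-- Isometry of (diagonal) quadratic forms. -/
def FormIsom (k : Type) [Field k] {ι κ : Type} [Fintype ι] [Fintype κ]
    (d : ι → k) (e : κ → k) : Prop :=
  QuadraticMap.Equivalent (diagQF k d) (diagQF k e)

/-- The orthogonal sum of `m` copies of the hyperbolic plane `⟨1, -1⟩`. -/
def hypForm (k : Type) [Field k] (m : ℕ) : Fin (2 * m) → k :=
  fun j => if j.val % 2 = 0 then 1 else -1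

/-- The Witt index of a (diagonal) form: the largest `m` such that the form is isometric
to `m·ℍ ⟂ (rest)` for some diagonal form `rest`. -/
noncomputable def wittIndex (k : Type) [Field k] {ι : Type} [Fintype ι] (d : ι → k) : ℕ :=
  sSup {m : ℕ | ∃ (s : ℕ) (e : Fin s → k), FormIsom k d (Sum.elim (hypForm k m) e)}
/-- The u-invariant of a field: the supremum of the dimensions of anisotropic regular
quadratic forms over `k` (`⊤` if unbounded). -/
noncomputable def uInv (k : Type) [Field k] : ℕ∞ :=
  sSup {N : ℕ∞ | ∃ n : ℕ, N = n ∧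
    ∃ d : Fin n → k, (∀ t, d t ≠ 0) ∧ (diagQF k d).Anisotropic}

/-- The refined m-invariant `m_{i,j}(k)`: the least dimension (`⊤` if there is none) of a
regular quadratic form `q` of dimension ≥ 1 over `k` with `i_W(q) < j` such that
`i_W(q ⟂ σ) ≥ j` for every `i`-dimensional regular form `σ` over `k`. -/
noncomputable def mInv (k : Type) [Field k] (i j : ℕ) : ℕ∞ :=
  sInf {N : ℕ∞ | ∃ n : ℕ, N = n ∧ 1 ≤ n ∧
    ∃ d : Fin n → k, (∀ t, d t ≠ 0) ∧ wittIndex k d < j ∧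
      ∀ σ : Fin i → k, (∀ t, σ t ≠ 0) → j ≤ wittIndex k (Sum.elim d σ)}

/-!
Everything rests on Witt's decomposition `q ≃ i_W(q)·ℍ ⟂ q_an` of diagonal forms, whose
uniqueness follows from Witt cancellation (reflections act transitively on vectors of equal
nonzero length). Write `u = u(k)` and `m = m(k)`.

For the upper bound take `q = t·ℍ ⟂ p` with `p` anisotropic of dimension at most `u`, of total
dimension `max 1 (u + 2j - 1 - i)`, and `t < j`. For every `i`-dimensional `σ` the anisotropic
part of `q ⟂ σ` has dimension at most `u`, which forces `i_W(q ⟂ σ) ≥ j`.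

For the lower bound let `q = w·ℍ ⟂ p` with `w < j` and build `σ` one entry at a time: adjoin
`⟨c⟩` keeping the anisotropic part of `p ⟂ σ` anisotropic as long as possible. Once this is
impossible, that anisotropic part is universal, hence of dimension at least `m`, and adjoining
`⟨1⟩` raises the Witt index by at most one. So either `i_W(p ⟂ σ) = 0` or
`m + 2 i_W(p ⟂ σ) ≤ dim p + i + 1`, and `i_W(q ⟂ σ) = w + i_W(p ⟂ σ) ≥ j` gives
`m + 2j ≤ dim q + i + 1`.

The two bounds coincide when `m = u`, and both equal `1` when `u + 2j - 1 - i ≤ 1`.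
-/

open QuadraticMap

namespace QuadraticMap

variable {R M M₂ N : Type*} [CommRing R] [AddCommGroup M] [Module R M] [AddCommGroup M₂]
  [Module R M₂] [AddCommGroup N] [Module R N]

lemma IsometryEquiv.polar_apply {Q : QuadraticMap R M N} {Q' : QuadraticMap R M₂ N}
    (f : Q.IsometryEquiv Q') (x y : M) : polar Q' (f x) (f y) = polar Q x y := by
  simp only [polar, ← map_add, IsometryEquiv.map_app]

lemma Equivalent.anisotropic_iff {Q : QuadraticMap R M N} {Q' : QuadraticMap R M₂ N}
    (h : Q.Equivalent Q') : Q.Anisotropic ↔ Q'.Anisotropic := by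
  obtain ⟨f⟩ := h
  refine ⟨fun hQ x hx => ?_, fun hQ' x hx => ?_⟩
  · simpa using congrArg f (hQ _ ((f.symm.map_app x).trans hx))
  · simpa using congrArg f.symm (hQ' _ ((f.map_app x).trans hx))

end QuadraticMap

namespace QuadraticForm

variable {k M M₂ M₃ : Type*} [Field k] [AddCommGroup M] [Module k M]
  [AddCommGroup M₂] [Module k M₂] [AddCommGroup M₃] [Module k M₃]

lemma polar_self_eq_two_mul (Q : QuadraticForm k M) (x : M) : polar Q x x = 2 * Q x := by
  rw [polar_self, two_smul, two_mul]

lemma map_sub_eq (Q : QuadraticForm k M) (x y : M) : Q (x - y) = Q x + Q y - polar Q x y := by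
  rw [sub_eq_add_neg, QuadraticMap.map_add Q, QuadraticMap.map_neg, polar_neg_right]; ring

lemma polar_smul_sq (a s t : k) :
    polar (a • (QuadraticMap.sq : QuadraticForm k k)) s t = 2 * a * s * t := by
  simp only [polar, smul_apply, sq_apply, smul_eq_mul]; ring

noncomputable def reflection (Q : QuadraticForm k M) {v : M} (hv : Q v ≠ 0) :
    Q.IsometryEquiv Q where
  toLinearEquiv := Module.reflection (x := v) (f := (Q v)⁻¹ • polarBilin Q v) (by
    simp only [LinearMap.smul_apply, polarBilin_apply_apply, polar_self_eq_two_mul, smul_eq_mul]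
    rw [mul_comm 2, inv_mul_cancel_left₀ hv])
  map_app' x := by
    change Q (x - ((Q v)⁻¹ * polar Q v x) • v) = Q x
    rw [map_sub_eq, QuadraticMap.map_smul, polar_smul_right, polar_comm Q x v, smul_eq_mul,
      smul_eq_mul]
    field_simp
    ring

lemma reflection_apply (Q : QuadraticForm k M) {v : M} (hv : Q v ≠ 0) (x : M) :
    Q.reflection hv x = x - ((Q v)⁻¹ * polar Q v x) • v :=
  rfl

theorem exists_isometryEquiv_apply_eq (h2 : (2 : k) ≠ 0) (Q : QuadraticForm k M) {u u' : M}
    (hq : Q u = Q u') (hu : Q u ≠ 0) : ∃ g : Q.IsometryEquiv Q, g u = u' := by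
  -- `Q (u - u') + Q (u + u') = 4 Q u ≠ 0`: reflect in `u - u'`, or else in `u + u'` and negate.
  by_cases hm : Q (u - u') = 0
  · have hp : Q (u + u') ≠ 0 := by
      have hsum : Q (u - u') + Q (u + u') = 2 * 2 * Q u := by
        rw [map_sub_eq, QuadraticMap.map_add Q, ← hq]; ring
      rw [hm, zero_add] at hsum
      rw [hsum]
      exact mul_ne_zero (mul_ne_zero h2 h2) hu
    have hpol : polar Q (u + u') u = Q (u + u') := by
      rw [polar_add_left, polar_self_eq_two_mul, QuadraticMap.map_add Q, ← hq, polar_comm]; ring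
    let neg : Q.IsometryEquiv Q := { LinearEquiv.neg k with map_app' := Q.map_neg }
    refine ⟨(Q.reflection hp).trans neg, ?_⟩
    change -(Q.reflection hp u) = u'
    rw [reflection_apply, hpol, inv_mul_cancel₀ hp, one_smul, sub_add_cancel_left, neg_neg]
  · have hpol : polar Q (u - u') u = Q (u - u') := by
      rw [polar_sub_left, polar_self_eq_two_mul, map_sub_eq, ← hq, polar_comm]; ring
    refine ⟨Q.reflection hm, ?_⟩
    rw [reflection_apply, hpol, inv_mul_cancel₀ hm, one_smul, sub_sub_cancel]

lemma fst_apply_zero_eq_zero (h2 : (2 : k) ≠ 0) {a : k} (ha : a ≠ 0)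
    {Q₂ : QuadraticForm k M₂} {Q₃ : QuadraticForm k M₃}
    (φ : ((a • QuadraticMap.sq).prod Q₂).IsometryEquiv ((a • QuadraticMap.sq).prod Q₃))
    (hφ : φ (1, 0) = (1, 0)) (x : M₂) : (φ (0, x)).1 = 0 := by
  have h := φ.polar_apply (1, 0) (0, x)
  simp only [hφ, polar_prod, polar_smul_sq, polar_zero_left, polar_zero_right, add_zero] at h
  simpa [h2, ha] using h

theorem equivalent_of_sq_prod (h2 : (2 : k) ≠ 0) {a : k} (ha : a ≠ 0)
    {Q₂ : QuadraticForm k M₂} {Q₃ : QuadraticForm k M₃}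
    (h : ((a • QuadraticMap.sq).prod Q₂).Equivalent ((a • QuadraticMap.sq).prod Q₃)) :
    Q₂.Equivalent Q₃ := by
  -- Correct `f` so that it fixes `(1, 0)`; it then maps `0 × M₂` onto its orthogonal `0 × M₃`.
  obtain ⟨f⟩ := h
  have hf : (a • QuadraticMap.sq).prod Q₃ (f (1, 0)) =
      (a • QuadraticMap.sq).prod Q₃ ((1 : k), (0 : M₃)) := by
    simp [IsometryEquiv.map_app]
  obtain ⟨g, hg⟩ := exists_isometryEquiv_apply_eq h2 _ hf (by simpa [IsometryEquiv.map_app])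
  set φ := f.trans g
  have hφ : φ (1, 0) = (1, 0) := hg
  have hφ' : φ.symm (1, 0) = (1, 0) := by rw [← hφ, φ.symm_apply_apply]
  have inr (x : M₂) : φ (0, x) = (0, (φ (0, x)).2) :=
    Prod.ext (fst_apply_zero_eq_zero h2 ha φ hφ x) rfl
  have inr' (y : M₃) : φ.symm (0, y) = (0, (φ.symm (0, y)).2) :=
    Prod.ext (fst_apply_zero_eq_zero h2 ha φ.symm hφ' y) rfl
  let e : M₂ ≃ₗ[k] M₃ := LinearEquiv.ofLinearMap
    (f := LinearMap.snd k k M₃ ∘ₗ φ.toLinearMap ∘ₗ LinearMap.inr k k M₂)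
    (g := LinearMap.snd k k M₂ ∘ₗ φ.symm.toLinearMap ∘ₗ LinearMap.inr k k M₃)
    (by ext y; simp [← inr'])
    (by ext x; simp [← inr])
  refine ⟨⟨e, fun x => ?_⟩⟩
  change Q₃ (φ (0, x)).2 = Q₂ x
  have := φ.map_app (0, x)
  rw [inr x] at this
  simpa using this

def perp (Q : QuadraticForm k M) (w : M) : Submodule k M := LinearMap.ker (polarBilin Q w)

lemma mem_perp {Q : QuadraticForm k M} {w y : M} : y ∈ Q.perp w ↔ polar Q w y = 0 := by
  simp [perp]

theorem equivalent_sq_prod_perp (h2 : (2 : k) ≠ 0) (Q : QuadraticForm k M) {w : M}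
    (hw : Q w ≠ 0) : Q.Equivalent ((Q w • QuadraticMap.sq).prod (Q.comp (Q.perp w).subtype)) := by
  let E : (k × Q.perp w) →ₗ[k] M :=
    LinearMap.coprod (LinearMap.toSpanSingleton k M w) (Q.perp w).subtype
  have hE : ∀ p : k × Q.perp w, E p = p.1 • w + p.2 := fun _ => rfl
  have hpolar : ∀ (t : k) (y : Q.perp w), polar Q w (t • w + y) = t * (2 * Q w) := by
    intro t y
    rw [polar_add_right, polar_smul_right, polar_self_eq_two_mul, mem_perp.mp y.2, smul_eq_mul,
      add_zero]
  have injective : Function.Injective E := by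
    rw [← LinearMap.ker_eq_bot, LinearMap.ker_eq_bot']
    rintro ⟨t, y⟩ hty
    rw [hE] at hty
    have ht : t = 0 := by
      simpa [h2, hw] using (hpolar t y).symm.trans (congrArg (polar Q w) hty)
    simp only [ht, zero_smul, zero_add, ZeroMemClass.coe_eq_zero] at hty
    simp [ht, hty]
  have surjective : Function.Surjective E := by
    intro x
    set c := polar Q w x / (2 * Q w)
    have hmem : x - c • w ∈ Q.perp w := by
      rw [mem_perp, polar_sub_right, polar_smul_right, polar_self_eq_two_mul, smul_eq_mul,
        div_mul_cancel₀ _ (mul_ne_zero h2 hw), sub_self]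
    exact ⟨(c, ⟨_, hmem⟩), by rw [hE]; simp⟩
  refine ⟨(QuadraticMap.IsometryEquiv.mk
    (LinearEquiv.ofBijective E ⟨injective, surjective⟩) ?_).symm⟩
  rintro ⟨t, y⟩
  change Q (t • w + y) = _
  rw [QuadraticMap.map_add Q, QuadraticMap.map_smul, polar_smul_left, mem_perp.mp y.2]
  simp [mul_comm]

theorem exists_equivalent_sq_prod_weightedSumSquares (h2 : (2 : k) ≠ 0) [FiniteDimensional k M]
    (Q : QuadraticForm k M) {w : M} (hw : Q w ≠ 0) : ∃ (n : ℕ) (f : Fin n → k),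
      Q.Equivalent ((Q w • QuadraticMap.sq).prod (weightedSumSquares k f)) := by
  have := invertibleOfNonzero h2
  obtain ⟨f, hf⟩ := equivalent_weightedSumSquares (Q.comp (Q.perp w).subtype)
  exact ⟨_, f, (Q.equivalent_sq_prod_perp h2 hw).trans ((Equivalent.refl _).prod hf)⟩

theorem exists_hyperbolic_pair (Q : QuadraticForm k M) {x u : M} (hx : Q x = 0)
    (hxu : polar Q x u ≠ 0) : ∃ w₁ w₂ : M, Q w₁ = 1 ∧ Q w₂ = -1 ∧ polar Q w₁ w₂ = 0 := by
  set b := polar Q x u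
  set y := b⁻¹ • x
  set v := u - (Q u / b) • x
  have hy : Q y = 0 := by rw [QuadraticMap.map_smul, hx, smul_zero]
  have hyy : polar Q y y = 0 := by rw [polar_self_eq_two_mul, hy, mul_zero]
  have hv : Q v = 0 := by
    rw [map_sub_eq, QuadraticMap.map_smul, hx, polar_smul_right, polar_comm, smul_eq_mul,
      smul_eq_mul]
    field_simp
    ring
  have hvv : polar Q v v = 0 := by rw [polar_self_eq_two_mul, hv, mul_zero]
  -- `y` and `v` span a hyperbolic plane, in which `y + v` and `y - v` are orthogonal.
  have hyv : polar Q y v = 1 := by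
    rw [polar_smul_left, polar_sub_right, polar_smul_right, polar_self_eq_two_mul Q x, hx,
      smul_eq_mul, smul_eq_mul]
    field_simp
    simp [b, _root_.sq]
  clear_value y v
  refine ⟨y + v, y - v, ?_, ?_, ?_⟩
  · rw [QuadraticMap.map_add Q, hy, hv, hyv]; ring
  · rw [map_sub_eq, hy, hv, hyv]; ring
  · rw [polar_add_left, polar_sub_right, polar_sub_right, hyy, hyv, polar_comm Q v y, hyv, hvv]
    ring

end QuadraticForm

section Diagonal

variable {k : Type} [Field k] {ι κ μ ν : Type} [Fintype ι] [Fintype κ] [Fintype μ] [Fintype ν]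

lemma diagQF_apply (d x : ι → k) : diagQF k d x = ∑ i, d i * (x i * x i) := by
  simp [diagQF, QuadraticMap.weightedSumSquares_apply, smul_eq_mul]

lemma polar_diagQF (d x y : ι → k) : polar (diagQF k d) x y = ∑ i, 2 * d i * x i * y i := by
  simp only [polar, diagQF_apply, Pi.add_apply, ← Finset.sum_sub_distrib]
  exact Finset.sum_congr rfl fun i _ => by ring

lemma polar_diagQF_single [DecidableEq ι] (d y : ι → k) (t : ι) :
    polar (diagQF k d) (Pi.single t 1) y = 2 * d t * y t := by
  rw [polar_diagQF, Finset.sum_eq_single t (fun i _ hi => by simp [hi]) (by simp)]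
  simp

lemma eq_zero_of_forall_polar_diagQF_eq_zero (h2 : (2 : k) ≠ 0) {d : ι → k}
    (hd : ∀ t, d t ≠ 0) {z : ι → k} (hz : ∀ y, polar (diagQF k d) z y = 0) : z = 0 := by
  classical
  funext t
  have := hz (Pi.single t 1)
  rw [polar_comm, polar_diagQF_single] at this
  simpa [h2, hd t] using this

lemma ne_zero_of_anisotropic {d : ι → k} (h : (diagQF k d).Anisotropic) (t : ι) : d t ≠ 0 := by
  classical
  intro ht
  have hx : diagQF k d (Pi.single t 1) = 0 := by
    rw [diagQF_apply]
    exact Finset.sum_eq_zero fun i _ => by by_cases hi : i = t <;> simp [hi, ht]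
  simpa using congrFun (h _ hx) t

lemma anisotropic_const {c : k} (hc : c ≠ 0) : (diagQF k (fun _ : Fin 1 => c)).Anisotropic := by
  intro x hx
  funext t
  simpa [diagQF_apply, hc, Subsingleton.elim t 0] using hx

lemma diagQF_sum_elim_equivalent (c : ι → k) (d : κ → k) :
    (diagQF k (Sum.elim c d)).Equivalent ((diagQF k c).prod (diagQF k d)) := by
  refine ⟨⟨LinearEquiv.sumArrowLequivProdArrow ι κ k k, fun x => ?_⟩⟩
  change (diagQF k c).prod (diagQF k d) (x ∘ Sum.inl, x ∘ Sum.inr) = _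
  simp [QuadraticMap.prod_apply, diagQF_apply, Fintype.sum_sum_type]

lemma diagQF_const_equivalent (c : k) :
    (diagQF k (fun _ : Fin 1 => c)).Equivalent (c • QuadraticMap.sq) := by
  refine ⟨⟨LinearEquiv.funUnique (Fin 1) k k, fun x => ?_⟩⟩
  simp [diagQF_apply]

lemma anisotropic_of_anisotropic_sum_elim {c : ι → k} {d : κ → k}
    (h : (diagQF k (Sum.elim c d)).Anisotropic) : (diagQF k c).Anisotropic :=
  (anisotropic_of_prod ((diagQF_sum_elim_equivalent c d).anisotropic_iff.mp h)).1

namespace FormIsom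

lemma refl (d : ι → k) : FormIsom k d d := QuadraticMap.Equivalent.refl _

lemma symm {d : ι → k} {e : κ → k} (h : FormIsom k d e) : FormIsom k e d :=
  QuadraticMap.Equivalent.symm h

lemma trans {d : ι → k} {e : κ → k} {f : μ → k} (h : FormIsom k d e) (h' : FormIsom k e f) :
    FormIsom k d f :=
  QuadraticMap.Equivalent.trans h h'

lemma comp_equiv (d : ι → k) (σ : κ ≃ ι) : FormIsom k (d ∘ σ) d := by
  refine ⟨⟨(LinearEquiv.funCongrLeft k k σ).symm, fun x => ?_⟩⟩
  change diagQF k d (x ∘ σ.symm) = diagQF k (d ∘ σ) x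
  simp only [diagQF_apply]
  exact Fintype.sum_equiv σ.symm _ _ (by simp)

lemma of_eq_comp {d : ι → k} {e : κ → k} (σ : ι ≃ κ) (h : d = e ∘ σ) : FormIsom k d e :=
  h ▸ comp_equiv e σ

lemma anisotropic_iff {d : ι → k} {e : κ → k} (h : FormIsom k d e) :
    (diagQF k d).Anisotropic ↔ (diagQF k e).Anisotropic :=
  QuadraticMap.Equivalent.anisotropic_iff h

lemma card_eq {d : ι → k} {e : κ → k} (h : FormIsom k d e) :
    Fintype.card ι = Fintype.card κ := by
  obtain ⟨f⟩ := h
  simpa using f.toLinearEquiv.finrank_eq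

lemma ne_zero (h2 : (2 : k) ≠ 0) {d : ι → k} {e : κ → k} (h : FormIsom k d e)
    (hd : ∀ t, d t ≠ 0) (t : κ) : e t ≠ 0 := by
  classical
  obtain ⟨f⟩ := h
  intro ht
  have hz : f.symm (Pi.single t 1) = 0 := by
    refine eq_zero_of_forall_polar_diagQF_eq_zero h2 hd fun y => ?_
    rw [← f.polar_apply, f.apply_symm_apply, polar_diagQF_single, ht]
    ring
  simpa using congrFun ((f.symm.toLinearEquiv.map_eq_zero_iff).mp hz) t

lemma sum_elim {d : ι → k} {e : κ → k} {d' : μ → k} {e' : ν → k} (h₁ : FormIsom k d d')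
    (h₂ : FormIsom k e e') : FormIsom k (Sum.elim d e) (Sum.elim d' e') :=
  ((diagQF_sum_elim_equivalent d e).trans (h₁.prod h₂)).trans
    (diagQF_sum_elim_equivalent d' e').symm

lemma sum_comm (d : ι → k) (e : κ → k) : FormIsom k (Sum.elim d e) (Sum.elim e d) :=
  of_eq_comp (Equiv.sumComm ι κ) (by ext (x | x) <;> rfl)

lemma sum_assoc (c : ι → k) (d : κ → k) (e : μ → k) :
    FormIsom k (Sum.elim (Sum.elim c d) e) (Sum.elim c (Sum.elim d e)) :=
  of_eq_comp (Equiv.sumAssoc ι κ μ) (by ext ((x | x) | x) <;> rfl)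

lemma sum_elim_of_isEmpty [IsEmpty μ] (c : μ → k) (d : ι → k) : FormIsom k (Sum.elim c d) d :=
  of_eq_comp (Equiv.emptySum μ ι) (by ext (x | x); exacts [isEmptyElim x, rfl])

lemma comp_equivFin (d : ι → k) : FormIsom k d (d ∘ (Fintype.equivFin ι).symm) :=
  of_eq_comp (Fintype.equivFin ι) (by ext; simp)

lemma snoc {n : ℕ} (σ : Fin n → k) (c : k) :
    FormIsom k (Fin.snoc σ c : Fin (n + 1) → k) (Sum.elim σ (fun _ : Fin 1 => c)) := by
  refine of_eq_comp finSumFinEquiv.symm (funext fun t => ?_)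
  induction t using Fin.lastCases with
  | last => simp [finSumFinEquiv_symm_last]
  | cast t => simp [finSumFinEquiv_symm_apply_castSucc]

lemma cancel_const (h2 : (2 : k) ≠ 0) {a : k} (ha : a ≠ 0) {d : ι → k} {e : κ → k}
    (h : FormIsom k (Sum.elim (fun _ : Fin 1 => a) d) (Sum.elim (fun _ : Fin 1 => a) e)) :
    FormIsom k d e := by
  have peel {τ : Type} [Fintype τ] (f : τ → k) :
      (diagQF k (Sum.elim (fun _ : Fin 1 => a) f)).Equivalent
        ((a • QuadraticMap.sq).prod (diagQF k f)) :=
    (diagQF_sum_elim_equivalent _ _).trans ((diagQF_const_equivalent a).prod (.refl _))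
  exact QuadraticForm.equivalent_of_sq_prod h2 ha (((peel d).symm.trans h).trans (peel e))

lemma cancel_left_fin (h2 : (2 : k) ≠ 0) {n : ℕ} {c : Fin n → k} (hc : ∀ t, c t ≠ 0)
    {d : ι → k} {e : κ → k} (h : FormIsom k (Sum.elim c d) (Sum.elim c e)) : FormIsom k d e := by
  induction n generalizing ι κ with
  | zero => exact ((sum_elim_of_isEmpty c d).symm.trans h).trans (sum_elim_of_isEmpty c e)
  | succ n ih =>
    have peel {μ : Type} [Fintype μ] (f : μ → k) : FormIsom k (Sum.elim c f)
        (Sum.elim (Fin.init c) (Sum.elim (fun _ : Fin 1 => c (Fin.last n)) f)) := by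
      conv_lhs => rw [← Fin.snoc_init_self c]
      exact ((snoc _ _).sum_elim (refl f)).trans (sum_assoc _ _ _)
    exact cancel_const h2 (hc _)
      (ih (c := Fin.init c) (fun t => hc _) (((peel d).symm.trans h).trans (peel e)))

lemma cancel_left (h2 : (2 : k) ≠ 0) {c : μ → k} (hc : ∀ t, c t ≠ 0) {d : ι → k} {e : κ → k}
    (h : FormIsom k (Sum.elim c d) (Sum.elim c e)) : FormIsom k d e := by
  have fin {τ : Type} [Fintype τ] (f : τ → k) := (comp_equivFin c).sum_elim (refl f)
  exact cancel_left_fin h2 (fun t => hc _) (((fin d).symm.trans h).trans (fin e))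

end FormIsom

end Diagonal

section Hyperbolic

variable {k : Type} [Field k] {ι : Type} [Fintype ι]

lemma hypForm_ne_zero (m : ℕ) (t : Fin (2 * m)) : hypForm k m t ≠ 0 := by
  unfold hypForm
  split_ifs <;> simp

lemma FormIsom.hypForm_add (a b : ℕ) :
    FormIsom k (hypForm k (a + b)) (Sum.elim (hypForm k a) (hypForm k b)) := by
  refine (FormIsom.of_eq_comp (finSumFinEquiv.trans (finCongr (mul_add 2 a b).symm))
    (funext fun t => ?_)).symm
  rcases t with t | t
  · rfl
  · simp [hypForm]

lemma FormIsom.hypForm_zero_sum_elim (e : ι → k) : FormIsom k (Sum.elim (hypForm k 0) e) e :=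
  have : IsEmpty (Fin (2 * 0)) := Fin.isEmpty'
  FormIsom.sum_elim_of_isEmpty _ e

lemma FormIsom.hypForm_sum_elim_assoc {a b : ℕ} (f : ι → k) : FormIsom k
    (Sum.elim (hypForm k a) (Sum.elim (hypForm k b) f)) (Sum.elim (hypForm k (a + b)) f) :=
  (FormIsom.sum_assoc _ _ _).symm.trans ((FormIsom.hypForm_add a b).symm.sum_elim (.refl f))

lemma FormIsom.one_neg_one_hypForm :
    FormIsom k (Sum.elim (fun _ : Fin 1 => (1 : k)) (fun _ : Fin 1 => -1)) (hypForm k 1) :=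
  FormIsom.of_eq_comp finSumFinEquiv (by ext (t | t) <;> fin_cases t <;> rfl)

lemma not_anisotropic_hypForm_sum_elim {r : ℕ} (hr : 1 ≤ r) (f : ι → k) :
    ¬ (diagQF k (Sum.elim (hypForm k r) f)).Anisotropic := by
  obtain ⟨s, rfl⟩ := Nat.exists_eq_add_of_le hr
  intro h
  have h₁ : (diagQF k (hypForm k 1)).Anisotropic := anisotropic_of_anisotropic_sum_elim
    ((FormIsom.hypForm_add 1 s).anisotropic_iff.mp (anisotropic_of_anisotropic_sum_elim h))
  have := congrFun (h₁ (fun _ => 1) (by simp [diagQF_apply, hypForm, Fin.sum_univ_two])) 0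
  simp at this

theorem exists_formIsom_hypForm_one_sum_elim (h2 : (2 : k) ≠ 0) {d : ι → k}
    (hd : ∀ t, d t ≠ 0) (hd' : ¬ (diagQF k d).Anisotropic) :
    ∃ (n : ℕ) (f : Fin n → k), FormIsom k d (Sum.elim (hypForm k 1) f) := by
  classical
  set Q := diagQF k d
  obtain ⟨x, hx0, hx⟩ := (QuadraticMap.not_anisotropic_iff_exists Q).mp hd'
  obtain ⟨t, ht⟩ : ∃ t, x t ≠ 0 := by simpa [funext_iff] using hx0
  have hxu : polar Q x (Pi.single t 1) ≠ 0 := by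
    rw [polar_comm, polar_diagQF_single]
    exact mul_ne_zero (mul_ne_zero h2 (hd t)) ht
  obtain ⟨w₁, w₂, hw₁, hw₂, hw₁₂⟩ := Q.exists_hyperbolic_pair hx hxu
  set Q₁ := Q.comp (Q.perp w₁).subtype
  have hQ₁ : Q₁ ⟨w₂, QuadraticForm.mem_perp.mpr hw₁₂⟩ = -1 := hw₂
  obtain ⟨n, f, hf⟩ := QuadraticForm.exists_equivalent_sq_prod_weightedSumSquares h2 Q₁
    (w := ⟨w₂, _⟩) (by simp [hQ₁])
  rw [hQ₁] at hf
  have hsplit : Q.Equivalent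
      (diagQF k (Sum.elim (fun _ : Fin 1 => (1 : k)) (Sum.elim (fun _ : Fin 1 => -1) f))) := by
    refine (Q.equivalent_sq_prod_perp h2 (w := w₁) (by simp [hw₁])).trans ?_
    rw [hw₁]
    refine ((diagQF_const_equivalent 1).symm.prod ?_).trans (diagQF_sum_elim_equivalent _ _).symm
    exact hf.trans (((diagQF_const_equivalent (-1)).symm.prod (.refl _)).trans
      (diagQF_sum_elim_equivalent _ _).symm)
  refine ⟨_, f, FormIsom.trans hsplit ?_⟩
  exact (FormIsom.sum_assoc _ _ _).symm.trans
    (FormIsom.one_neg_one_hypForm.sum_elim (FormIsom.refl f))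

end Hyperbolic

section WittIndex

variable {k : Type} [Field k] {ι κ : Type} [Fintype ι] [Fintype κ]

lemma bddAbove_wittIndex_set (d : ι → k) :
    BddAbove {m : ℕ | ∃ (s : ℕ) (e : Fin s → k), FormIsom k d (Sum.elim (hypForm k m) e)} := by
  refine ⟨Fintype.card ι, ?_⟩
  rintro m ⟨s, e, h⟩
  have := h.card_eq
  simp only [Fintype.card_sum, Fintype.card_fin] at this
  omega

lemma le_wittIndex {d : ι → k} {m : ℕ} {g : κ → k}
    (h : FormIsom k d (Sum.elim (hypForm k m) g)) : m ≤ wittIndex k d :=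
  le_csSup (bddAbove_wittIndex_set d)
    ⟨_, _, h.trans ((FormIsom.refl _).sum_elim (FormIsom.comp_equivFin g))⟩

lemma exists_formIsom_hypForm_wittIndex (d : ι → k) :
    ∃ (s : ℕ) (e : Fin s → k), FormIsom k d (Sum.elim (hypForm k (wittIndex k d)) e) := by
  refine Nat.sSup_mem ?_ (bddAbove_wittIndex_set d)
  exact ⟨0, _, _, (FormIsom.comp_equivFin d).trans (FormIsom.hypForm_zero_sum_elim _).symm⟩

lemma FormIsom.wittIndex_eq {d : ι → k} {e : κ → k} (h : FormIsom k d e) :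
    wittIndex k d = wittIndex k e := by
  obtain ⟨s, f, hd⟩ := exists_formIsom_hypForm_wittIndex d
  obtain ⟨s', f', he⟩ := exists_formIsom_hypForm_wittIndex e
  exact le_antisymm (le_wittIndex (h.symm.trans hd)) (le_wittIndex (h.trans he))

lemma wittIndex_le_sum_elim (d : ι → k) (e : κ → k) :
    wittIndex k d ≤ wittIndex k (Sum.elim d e) := by
  obtain ⟨s, f, hd⟩ := exists_formIsom_hypForm_wittIndex d
  exact le_wittIndex ((hd.sum_elim (.refl e)).trans (FormIsom.sum_assoc _ _ _))

theorem wittIndex_eq_of_formIsom (h2 : (2 : k) ≠ 0) {d : ι → k} {w s : ℕ} {e : Fin s → k}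
    (he : (diagQF k e).Anisotropic) (h : FormIsom k d (Sum.elim (hypForm k w) e)) :
    wittIndex k d = w := by
  refine le_antisymm ?_ (le_wittIndex h)
  by_contra! hw
  obtain ⟨s', f, hd⟩ := exists_formIsom_hypForm_wittIndex d
  obtain ⟨r, hr⟩ := Nat.exists_eq_add_of_lt hw
  rw [hr, add_assoc] at hd
  have hcancel : FormIsom k e (Sum.elim (hypForm k (r + 1)) f) :=
    FormIsom.cancel_left h2 (hypForm_ne_zero w)
      (h.symm.trans (hd.trans (FormIsom.hypForm_sum_elim_assoc f).symm))
  exact not_anisotropic_hypForm_sum_elim (Nat.le_add_left 1 r) f (hcancel.anisotropic_iff.mp he)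

lemma wittIndex_eq_zero (h2 : (2 : k) ≠ 0) {d : ι → k} (hd : (diagQF k d).Anisotropic) :
    wittIndex k d = 0 :=
  wittIndex_eq_of_formIsom h2 ((FormIsom.comp_equivFin d).anisotropic_iff.mp hd)
    ((FormIsom.comp_equivFin d).trans (FormIsom.hypForm_zero_sum_elim _).symm)

lemma one_le_wittIndex (h2 : (2 : k) ≠ 0) {d : ι → k} (hd : ∀ t, d t ≠ 0)
    (hd' : ¬ (diagQF k d).Anisotropic) : 1 ≤ wittIndex k d :=
  have ⟨_, _, h⟩ := exists_formIsom_hypForm_one_sum_elim h2 hd hd'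
  le_wittIndex h

theorem exists_witt_decomposition (h2 : (2 : k) ≠ 0) (d : ι → k) (hd : ∀ t, d t ≠ 0) :
    ∃ (w s : ℕ) (e : Fin s → k), (diagQF k e).Anisotropic ∧
      FormIsom k d (Sum.elim (hypForm k w) e) := by
  induction hn : Fintype.card ι using Nat.strong_induction_on generalizing ι with
  | _ n ih =>
  by_cases hd' : (diagQF k d).Anisotropic
  · exact ⟨0, _, _, (FormIsom.comp_equivFin d).anisotropic_iff.mp hd',
      (FormIsom.comp_equivFin d).trans (FormIsom.hypForm_zero_sum_elim _).symm⟩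
  obtain ⟨r, f, hf⟩ := exists_formIsom_hypForm_one_sum_elim h2 hd hd'
  have hcard := hf.card_eq
  simp only [Fintype.card_sum, Fintype.card_fin] at hcard
  obtain ⟨w, s, e, he, hfe⟩ := ih r (by omega) f (fun t => hf.ne_zero h2 hd (.inr t))
    (Fintype.card_fin r)
  exact ⟨1 + w, s, e, he,
    hf.trans (((FormIsom.refl _).sum_elim hfe).trans (FormIsom.hypForm_sum_elim_assoc e))⟩

lemma wittIndex_hypForm_sum_elim (h2 : (2 : k) ≠ 0) {p : ι → k} (hp : ∀ t, p t ≠ 0) (a : ℕ) :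
    wittIndex k (Sum.elim (hypForm k a) p) = a + wittIndex k p := by
  obtain ⟨w, s, e, he, h⟩ := exists_witt_decomposition h2 p hp
  rw [wittIndex_eq_of_formIsom h2 he h, wittIndex_eq_of_formIsom h2 he
    (((FormIsom.refl _).sum_elim h).trans (FormIsom.hypForm_sum_elim_assoc e))]

lemma FormIsom.const_neg_hypForm (h2 : (2 : k) ≠ 0) {c : k} (hc : c ≠ 0) :
    FormIsom k (Sum.elim (fun _ : Fin 1 => c) (fun _ : Fin 1 => -c)) (hypForm k 1) := by
  have hiso : ¬ (diagQF k (Sum.elim (fun _ : Fin 1 => c) (fun _ : Fin 1 => -c))).Anisotropic :=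
    fun h => by simpa using congrFun (h (fun _ => 1) (by simp [diagQF_apply])) (.inl 0)
  obtain ⟨n, f, h⟩ := exists_formIsom_hypForm_one_sum_elim h2 (by simp [hc]) hiso
  obtain rfl : n = 0 := by simpa using h.card_eq
  exact h.trans ((FormIsom.sum_comm _ _).trans (FormIsom.sum_elim_of_isEmpty _ _))

lemma wittIndex_sum_elim_const_le_one (h2 : (2 : k) ≠ 0) {α : ι → k}
    (hα : (diagQF k α).Anisotropic) {c : k} (hc : c ≠ 0) :
    wittIndex k (Sum.elim α (fun _ : Fin 1 => c)) ≤ 1 := by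
  have h : FormIsom k (Sum.elim (Sum.elim α (fun _ : Fin 1 => c)) (fun _ : Fin 1 => -c))
      (Sum.elim (hypForm k 1) α) :=
    (FormIsom.sum_assoc _ _ _).trans (((FormIsom.refl α).sum_elim
      (FormIsom.const_neg_hypForm h2 hc)).trans (FormIsom.sum_comm _ _))
  calc wittIndex k (Sum.elim α (fun _ : Fin 1 => c))
      ≤ wittIndex k (Sum.elim (Sum.elim α (fun _ : Fin 1 => c)) (fun _ : Fin 1 => -c)) :=
        wittIndex_le_sum_elim _ _
    _ = 1 := by
      rw [h.wittIndex_eq, wittIndex_hypForm_sum_elim h2 (ne_zero_of_anisotropic hα),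
        wittIndex_eq_zero h2 hα]

end WittIndex

section Invariants

variable {k : Type} [Field k] {ι : Type} [Fintype ι]

lemma card_le_uInv {d : ι → k} (hd : (diagQF k d).Anisotropic) :
    (Fintype.card ι : ℕ∞) ≤ uInv k :=
  le_sSup ⟨_, rfl, _, fun _ => ne_zero_of_anisotropic hd _,
    (FormIsom.comp_equivFin d).anisotropic_iff.mp hd⟩

lemma exists_anisotropic_of_le_uInv {u n : ℕ} (hu : uInv k = u) (hn : n ≤ u) :
    ∃ d : Fin n → k, (diagQF k d).Anisotropic := by
  have hne : Nonempty {N : ℕ∞ | ∃ n : ℕ, N = n ∧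
      ∃ d : Fin n → k, (∀ t, d t ≠ 0) ∧ (diagQF k d).Anisotropic} :=
    ⟨0, 0, rfl, finZeroElim, finZeroElim, fun x _ => Subsingleton.elim x 0⟩
  obtain ⟨u', hu', g, -, hg⟩ := ENat.sSup_mem_of_nonempty_of_lt_top (hu ▸ ENat.natCast_lt_top u)
  obtain ⟨m, rfl⟩ := Nat.exists_eq_add_of_le hn
  obtain rfl : u' = n + m := by exact_mod_cast hu'.symm.trans hu
  refine ⟨g ∘ Fin.castAdd m, anisotropic_of_anisotropic_sum_elim (d := g ∘ Fin.natAdd n) ?_⟩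
  refine (FormIsom.of_eq_comp finSumFinEquiv ?_).anisotropic_iff.mpr hg
  ext (t | t) <;> simp

lemma card_le_two_mul_wittIndex_add_uInv (h2 : (2 : k) ≠ 0) {d : ι → k} (hd : ∀ t, d t ≠ 0) :
    (Fintype.card ι : ℕ∞) ≤ 2 * wittIndex k d + uInv k := by
  obtain ⟨w, s, e, he, h⟩ := exists_witt_decomposition h2 d hd
  have hcard := h.card_eq
  simp only [Fintype.card_sum, Fintype.card_fin] at hcard
  rw [hcard, wittIndex_eq_of_formIsom h2 he h]
  push_cast
  gcongr
  simpa using card_le_uInv he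

end Invariants

section Bounds

variable {k : Type} [Field k] {ι : Type} [Fintype ι]

lemma max_one_cast_add_two_mul_sub (a j i : ℕ) :
    max 1 ((a : ℕ∞) + 2 * j - 1 - i) = ((max 1 (a + 2 * j - 1 - i) : ℕ) : ℕ∞) := by
  norm_cast

lemma mInv_one_one_le (h2 : (2 : k) ≠ 0) {a : ℕ} {α : Fin a → k}
    (hα : (diagQF k α).Anisotropic)
    (hext : ∀ c : k, c ≠ 0 → ¬ (diagQF k (Sum.elim α (fun _ : Fin 1 => c))).Anisotropic) :
    mInv k 1 1 ≤ a := by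
  have hα₀ := ne_zero_of_anisotropic hα
  have ha : 1 ≤ a := by
    by_contra! ha
    obtain rfl : a = 0 := by omega
    exact hext 1 one_ne_zero ((FormIsom.sum_elim_of_isEmpty α _).anisotropic_iff.mpr
      (anisotropic_const one_ne_zero))
  refine sInf_le ⟨a, rfl, ha, α, hα₀, by simp [wittIndex_eq_zero h2 hα], fun σ hσ => ?_⟩
  have hσ' : σ = fun _ => σ 0 := funext fun t => by rw [Subsingleton.elim t 0]
  refine one_le_wittIndex h2 (by rintro (t | t); exacts [hα₀ t, hσ t]) ?_
  rw [hσ']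
  exact hext _ (hσ 0)

lemma FormIsom.sum_elim_snoc {n : ℕ} (p : ι → k) (σ : Fin n → k) (c : k) :
    FormIsom k (Sum.elim p (Fin.snoc σ c : Fin (n + 1) → k))
      (Sum.elim (Sum.elim p σ) (fun _ : Fin 1 => c)) :=
  ((FormIsom.refl p).sum_elim (FormIsom.snoc σ c)).trans (FormIsom.sum_assoc _ _ _).symm

theorem exists_wittIndex_sum_elim_le (h2 : (2 : k) ≠ 0) {m : ℕ} (hm : mInv k 1 1 = m)
    {p : ι → k} (hp : (diagQF k p).Anisotropic) (i : ℕ) :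
    ∃ σ : Fin i → k, (∀ t, σ t ≠ 0) ∧ (wittIndex k (Sum.elim p σ) = 0 ∨
      m + 2 * wittIndex k (Sum.elim p σ) ≤ Fintype.card ι + i + 1) := by
  induction i with
  | zero =>
    refine ⟨finZeroElim, finZeroElim, .inl ?_⟩
    rw [((FormIsom.sum_comm _ _).trans (FormIsom.sum_elim_of_isEmpty _ p)).wittIndex_eq,
      wittIndex_eq_zero h2 hp]
  | succ i ih =>
    obtain ⟨σ, hσ, hbound⟩ := ih
    have hpσ : ∀ t, Sum.elim p σ t ≠ 0 := by
      rintro (t | t); exacts [ne_zero_of_anisotropic hp t, hσ t]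
    obtain ⟨w, a, α, hα, h⟩ := exists_witt_decomposition h2 _ hpσ
    have hcard := h.card_eq
    simp only [Fintype.card_sum, Fintype.card_fin] at hcard
    rw [wittIndex_eq_of_formIsom h2 hα h] at hbound
    have hsnoc {c : k} (hc : c ≠ 0) : wittIndex k (Sum.elim p (Fin.snoc σ c : Fin (i + 1) → k)) =
        w + wittIndex k (Sum.elim α (fun _ : Fin 1 => c)) := by
      have h' := (FormIsom.sum_elim_snoc p σ c).trans ((h.sum_elim (.refl _)).trans
        (FormIsom.sum_assoc _ _ _))
      rw [h'.wittIndex_eq, wittIndex_hypForm_sum_elim h2]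
      rintro (t | t); exacts [ne_zero_of_anisotropic hα t, hc]
    have hsnoc_ne {c : k} (hc : c ≠ 0) (t : Fin (i + 1)) :
        (Fin.snoc σ c : Fin (i + 1) → k) t ≠ 0 := by
      induction t using Fin.lastCases <;> simp [hσ, hc]
    by_cases hext : ∃ c : k, c ≠ 0 ∧ (diagQF k (Sum.elim α (fun _ : Fin 1 => c))).Anisotropic
    · obtain ⟨c, hc, hαc⟩ := hext
      refine ⟨Fin.snoc σ c, hsnoc_ne hc, ?_⟩
      rw [hsnoc hc, wittIndex_eq_zero h2 hαc]
      omega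
    · simp only [not_exists, not_and] at hext
      have hma : m ≤ a := by exact_mod_cast hm ▸ mInv_one_one_le h2 hα hext
      refine ⟨Fin.snoc σ 1, hsnoc_ne one_ne_zero, .inr ?_⟩
      have := wittIndex_sum_elim_const_le_one h2 hα (one_ne_zero (α := k))
      rw [hsnoc one_ne_zero]
      omega

lemma exists_wittIndex_eq (h2 : (2 : k) ≠ 0) {u n t : ℕ} (hu : uInv k = u) (h₁ : 2 * t ≤ n)
    (h₂ : n ≤ 2 * t + u) : ∃ d : Fin n → k, (∀ s, d s ≠ 0) ∧ wittIndex k d = t := by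
  obtain ⟨p, hp⟩ := exists_anisotropic_of_le_uInv hu (show n - 2 * t ≤ u by omega)
  have hp₀ := ne_zero_of_anisotropic hp
  have hd₀ : ∀ s, Sum.elim (hypForm k t) p s ≠ 0 := by
    rintro (s | s); exacts [hypForm_ne_zero t s, hp₀ s]
  refine ⟨Sum.elim (hypForm k t) p ∘
    (finCongr (show n = 2 * t + (n - 2 * t) by omega)).trans finSumFinEquiv.symm,
    (FormIsom.comp_equiv _ _).symm.ne_zero h2 hd₀, ?_⟩
  rw [(FormIsom.comp_equiv _ _).wittIndex_eq, wittIndex_hypForm_sum_elim h2 hp₀,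
    wittIndex_eq_zero h2 hp, add_zero]

theorem mInv_le_max (h2 : (2 : k) ≠ 0) {u : ℕ} (hu : uInv k = u) {i j : ℕ} (hi : 1 ≤ i)
    (hj : 1 ≤ j) : mInv k i j ≤ max 1 (uInv k + 2 * (j : ℕ∞) - 1 - (i : ℕ∞)) := by
  have hu₁ : 1 ≤ u := by
    simpa [hu] using card_le_uInv (anisotropic_const (one_ne_zero (α := k)))
  rw [hu, max_one_cast_add_two_mul_sub]
  set n := max 1 (u + 2 * j - 1 - i)
  have hn : n = 1 ∨ n = u + 2 * j - 1 - i := max_choice _ _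
  have hn₁ : 1 ≤ n := le_max_left _ _
  have hn₂ : u + 2 * j - 1 - i ≤ n := le_max_right _ _
  clear_value n
  -- `t = ⌈(n - u) / 2⌉` hyperbolic planes leave room for an anisotropic part of dimension `≤ u`
  obtain ⟨d, hd, hdt⟩ := exists_wittIndex_eq h2 hu (n := n) (t := (n + 1 - u) / 2)
    (by omega) (by omega)
  refine sInf_le ⟨n, rfl, hn₁, d, hd, by omega, fun σ hσ => ?_⟩
  have hne : ∀ t, Sum.elim d σ t ≠ 0 := by rintro (t | t); exacts [hd t, hσ t]
  have := card_le_two_mul_wittIndex_add_uInv h2 hne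
  rw [hu] at this
  simp only [Fintype.card_sum, Fintype.card_fin] at this
  have : n + i ≤ 2 * wittIndex k (Sum.elim d σ) + u := by exact_mod_cast this
  omega

theorem add_two_mul_le_of_mInv_eq (h2 : (2 : k) ≠ 0) {m : ℕ} (hm : mInv k 1 1 = m)
    {i j n : ℕ} {d : Fin n → k} (hd : ∀ t, d t ≠ 0) (hdj : wittIndex k d < j)
    (hσ : ∀ σ : Fin i → k, (∀ t, σ t ≠ 0) → j ≤ wittIndex k (Sum.elim d σ)) :
    m + 2 * j ≤ n + i + 1 := by
  obtain ⟨w, P, p, hp, h⟩ := exists_witt_decomposition h2 d hd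
  have hcard := h.card_eq
  simp only [Fintype.card_sum, Fintype.card_fin] at hcard
  rw [wittIndex_eq_of_formIsom h2 hp h] at hdj
  obtain ⟨σ, hσ₀, hbound⟩ := exists_wittIndex_sum_elim_le h2 hm hp i
  have hj := hσ σ hσ₀
  rw [((h.sum_elim (.refl σ)).trans (FormIsom.sum_assoc _ _ _)).wittIndex_eq,
    wittIndex_hypForm_sum_elim h2 (by rintro (t | t); exacts [ne_zero_of_anisotropic hp t, hσ₀ t])]
    at hj
  simp only [Fintype.card_fin] at hbound
  omega

theorem max_le_mInv (h2 : (2 : k) ≠ 0) {m : ℕ} (hm : mInv k 1 1 = m) (i j : ℕ) :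
    max 1 (mInv k 1 1 + 2 * (j : ℕ∞) - 1 - (i : ℕ∞)) ≤ mInv k i j := by
  refine le_sInf ?_
  rintro _ ⟨n, rfl, hn, d, hd, hdj, hσ⟩
  have := add_two_mul_le_of_mInv_eq h2 hm hd hdj hσ
  rw [hm, max_one_cast_add_two_mul_sub]
  exact Nat.cast_le.mpr (by omega)

end Bounds

/-- **Theorem (upper and lower bounds for the refined m-invariants).**  Let `k` be a
field of characteristic ≠ 2 with `u(k) < ∞`, and let `i, j ≥ 1`.  Then
`max{1, m(k) + 2j - 1 - i} ≤ m_{i,j}(k) ≤ max{1, u(k) + 2j - 1 - i}`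
(computed in `ℕ∞` with truncated subtraction, and `m(k) = m_{1,1}(k)`).  Moreover, if
either `u(k) + 2j - 1 - i ≤ 1` or `m(k) = u(k)`, then both inequalities are
equalities. -/
theorem statement12 (k : Type) [Field k] (hchar : ringChar k ≠ 2) (hu : uInv k ≠ ⊤)
    (i j : ℕ) (hi : 1 ≤ i) (hj : 1 ≤ j) :
    (max 1 (mInv k 1 1 + 2 * (j : ℕ∞) - 1 - (i : ℕ∞)) ≤ mInv k i j ∧
      mInv k i j ≤ max 1 (uInv k + 2 * (j : ℕ∞) - 1 - (i : ℕ∞))) ∧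
    ((uInv k + 2 * (j : ℕ∞) - 1 - (i : ℕ∞) ≤ 1 ∨ mInv k 1 1 = uInv k) →
      (max 1 (mInv k 1 1 + 2 * (j : ℕ∞) - 1 - (i : ℕ∞)) = mInv k i j ∧
        mInv k i j = max 1 (uInv k + 2 * (j : ℕ∞) - 1 - (i : ℕ∞)))) := by
  have h2 : (2 : k) ≠ 0 := Ring.two_ne_zero hchar
  obtain ⟨u, hu⟩ := ENat.ne_top_iff_exists.mp hu
  have upper := mInv_le_max h2 hu.symm hi hj
  obtain ⟨m, hm⟩ : ∃ m : ℕ, (m : ℕ∞) = mInv k 1 1 := by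
    refine ENat.ne_top_iff_exists.mp (ne_top_of_le_ne_top ?_ (mInv_le_max h2 hu.symm le_rfl le_rfl))
    rw [← hu, max_one_cast_add_two_mul_sub]
    exact ENat.natCast_ne_top _
  have lower := max_le_mInv h2 hm.symm i j
  refine ⟨⟨lower, upper⟩, fun h => ?_⟩
  have hUL : max 1 (uInv k + 2 * (j : ℕ∞) - 1 - (i : ℕ∞)) ≤
      max 1 (mInv k 1 1 + 2 * (j : ℕ∞) - 1 - (i : ℕ∞)) := by
    rcases h with h | h
    · exact (max_eq_left h).trans_le (le_max_left _ _)
    · rw [h]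
  exact ⟨le_antisymm lower (upper.trans hUL), le_antisymm upper (hUL.trans lower)⟩
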